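/- arXiv:1306.3863 — 3 statements merged into one kernel-verified Lean document; each statement's English description precedes it below -/
import Mathlib

section
/- Let H be a complex Hilbert space with a conjugate-linear involution J and a self-adjoint operator T commuting suitably with J in the following sense: there is a nonzero α such that if Tλ = α²λ, then μ := -(i√2/α)·J(Dλ) (for an operator D with D J D = (α²/2)·J on the eigenspace) satisfies Tμ = α²μ and μ is linearly independent from λ. Then every nonzero eigenvalue α² of T has eigenspace of even complex dimension. -/
open Module

universe u

lemma aux_even : ∀ (n : ℕ) (E : Type u) [AddCommGroup E] [Module ℂ E] [FiniteDimensional ℂ E],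
    Module.finrank ℂ E = n → ∀ (J : E → E), (∀ x y, J (x + y) = J x + J y) →
    (∀ (c : ℂ) x, J (c • x) = (starRingEnd ℂ c) • J x) → (∀ x, J (J x) = -x) → Even n := by
  intro n
  induction n using Nat.strong_induction_on with
  | _ n ih =>
    intro E _ _ _ hrank J hadd hsmul hJJ
    rcases Nat.eq_zero_or_pos n with h0 | hpos
    · simp [h0]
    · have : Nontrivial E := by
        rw [← Module.finrank_pos_iff (R := ℂ)]
        omega
      obtain ⟨v, hv⟩ := exists_ne (0 : E)
      have hJ0 : J 0 = 0 := by
        have := hadd 0 0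
        simp at this
        linear_combination (norm := abel) this
      -- linear independence of v, J v
      have hli : LinearIndependent ℂ ![v, J v] := by
        rw [LinearIndependent.pair_iff]
        intro s t hst
        have h2 : (starRingEnd ℂ s) • J v + (starRingEnd ℂ t) • (-v) = 0 := by
          have := congrArg J hst
          rw [hadd, hsmul, hsmul, hJJ, hJ0] at this
          exact this
        -- s • v + t • J v = 0 ; conj s • J v - conj t • v = 0
        have h3 : (s * starRingEnd ℂ s + t * starRingEnd ℂ t) • v = 0 := by
          have e1 := congrArg (fun x => (starRingEnd ℂ s) • x) hst
          have e2 := congrArg (fun x => t • x) h2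
          simp only [smul_add, smul_smul, smul_zero, smul_neg] at e1 e2
          have h4 := congrArg₂ (· - ·) e1 e2
          simp only [sub_zero] at h4
          rw [← h4]
          module
        have hco : s * starRingEnd ℂ s + t * starRingEnd ℂ t = 0 := by
          by_contra hc
          exact hv (by simpa [hc] using (smul_eq_zero.mp h3).resolve_left hc)
        have hns : Complex.normSq s + Complex.normSq t = 0 := by
          simpa [Complex.mul_conj, ← Complex.ofReal_add, Complex.ext_iff] using hco
        have hs0 := Complex.normSq_nonneg s
        have ht0 := Complex.normSq_nonneg t
        constructor <;> rw [← Complex.normSq_eq_zero] <;> linarith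
      set W : Submodule ℂ E := Submodule.span ℂ {v, J v} with hW
      have hrange : Set.range ![v, J v] = {v, J v} := by
        ext x
        simp [Matrix.range_cons, Matrix.range_empty]
        tauto
      have hWrank : finrank ℂ W = 2 := by
        rw [hW, ← hrange, finrank_span_eq_card hli]
        simp
      have hJW : ∀ x ∈ W, J x ∈ W := by
        intro x hx
        induction hx using Submodule.span_induction with
        | mem y hy =>
          rcases hy with rfl | rfl
          · exact Submodule.subset_span (by simp)
          · rw [hJJ]; exact W.neg_mem (Submodule.subset_span (by simp))
        | zero => rw [hJ0]; exact W.zero_mem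
        | add a b _ _ ha hb => rw [hadd]; exact W.add_mem ha hb
        | smul c a _ ha => rw [hsmul]; exact W.smul_mem _ ha
      -- quotient
      let Q := E ⧸ W
      let J' : Q → Q := fun q => Quotient.liftOn' q
        (fun x => Submodule.Quotient.mk (J x))
        (by
          intro a b hab
          have hab' : a - b ∈ W := by
            rwa [Submodule.quotientRel_def] at hab
          apply (Submodule.Quotient.eq W).mpr
          have : J (a - b) = J a - J b := by
            have h1 := hadd (a - b) b
            simp at h1
            rw [h1]
            abel
          rw [← this]
          exact hJW _ hab')
      have hq : ∀ x : E, J' (Submodule.Quotient.mk x) = Submodule.Quotient.mk (J x) :=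
        fun x => rfl
      have hadd' : ∀ x y : Q, J' (x + y) = J' x + J' y := by
        intro x y
        induction x using Quotient.inductionOn' with | _ a =>
        induction y using Quotient.inductionOn' with | _ b =>
        show J' (Submodule.Quotient.mk (a + b)) = _
        rw [hq, hadd, Submodule.Quotient.mk_add]
        rfl
      have hsmul' : ∀ (c : ℂ) (x : Q), J' (c • x) = (starRingEnd ℂ c) • J' x := by
        intro c x
        induction x using Quotient.inductionOn' with | _ a =>
        show J' (Submodule.Quotient.mk (c • a)) = _
        rw [hq, hsmul, Submodule.Quotient.mk_smul]
        rfl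
      have hJJ' : ∀ x : Q, J' (J' x) = -x := by
        intro x
        induction x using Quotient.inductionOn' with | _ a =>
        show J' (J' (Submodule.Quotient.mk a)) = -(Submodule.Quotient.mk a)
        rw [hq, hq, hJJ]
        exact Submodule.Quotient.mk_neg (p := W) (x := a)
      have hsum : finrank ℂ Q + finrank ℂ W = finrank ℂ E := Submodule.finrank_quotient_add_finrank W
      have hle : finrank ℂ Q < n := by omega
      have hev := ih _ hle Q rfl J' hadd' hsmul' hJJ'
      have : n = finrank ℂ Q + 2 := by omega
      rw [this]
      exact hev.add (by norm_num)

/-- Quaternionic structure on eigenspaces: if `T` is a linear operator on a complex vector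
space `H`, `α ≠ 0`, and there is an additive conjugate-linear map `J` (abstracting
`λ ↦ μ = -(i√2/α)·𝒟λ̄`) which preserves the eigenspace of `T` for the eigenvalue `α²`
and squares to `-id` there, then that eigenspace has even complex dimension. -/
theorem stmt_6 {H : Type*} [AddCommGroup H] [Module ℂ H]
    (T : Module.End ℂ H) (α : ℂ) (hα : α ≠ 0)
    (J : H → H)
    (hadd : ∀ x y : H, J (x + y) = J x + J y)
    (hsmul : ∀ (c : ℂ) (x : H), J (c • x) = (starRingEnd ℂ c) • J x)
    (hmap : ∀ x ∈ T.eigenspace (α ^ 2), J x ∈ T.eigenspace (α ^ 2))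
    (hJJ : ∀ x ∈ T.eigenspace (α ^ 2), J (J x) = -x)
    [FiniteDimensional ℂ (T.eigenspace (α ^ 2))] :
    Even (Module.finrank ℂ (T.eigenspace (α ^ 2))) := by
  set E := T.eigenspace (α ^ 2)
  let J₀ : E → E := fun x => ⟨J x, hmap x x.2⟩
  exact aux_even _ _ rfl J₀ (fun x y => Subtype.ext (hadd x y))
    (fun c x => Subtype.ext (hsmul c x)) (fun x => Subtype.ext (hJJ x x.2))
end

section
/- Let λ^Ā and μ^Ā be two solutions of the first-order system E^e_i(∂_e λ^Ā) + (i/2)q_i λ^Ā = 0 on a Bianchi 3-space (ī = 1,2,3; Ā = 0,1), and set ω := λ^Ā μ^B̄ ε_{ĀB̄}. Then q_i θ^i_e = i·∂_e(ln ω); in particular, if the system admits global nonvanishing solutions then the 1-form q_i θ^i is exact. -/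
/-!
The pairing `ω = λ⁰μ¹ - λ¹μ⁰` of two solutions is annihilated by `E_i + i q_i`, the system
with `q` doubled, because the symplectic form is bilinear. Expanding a vector in the frame
`E_i` then gives `dω = -i (q_i θ^i) ω`. Since `ℝ³` is simply connected and `exp : ℂ → ℂ \ {0}`
is a covering map, the nonvanishing `ω` has a continuous logarithm; a continuous logarithm of
a differentiable function is differentiable with derivative `dω / ω`, so `q_i θ^i = d(i log ω)`.
-/

open Complex Filter Topology

theorem Complex.exists_continuous_exp_eq {A : Type*} [TopologicalSpace A]
    [SimplyConnectedSpace A] [LocallyPathConnectedSpace A] {f : A → ℂ} (hf : Continuous f)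
    (h0 : ∀ a, f a ≠ 0) : ∃ g : A → ℂ, Continuous g ∧ ∀ a, exp (g a) = f a := by
  obtain ⟨a₀⟩ : Nonempty A := inferInstance
  obtain ⟨g, ⟨-, hg⟩, -⟩ := isCoveringMapOn_exp.existsUnique_continuousMap_lifts ⟨f, hf⟩
    (exp_log (h0 a₀)) h0
  exact ⟨g, g.continuous, congr_fun hg⟩

section

variable {E : Type*} [NormedAddCommGroup E] [NormedSpace ℝ E]

theorem Complex.hasFDerivAt_of_exp_eq {g f : E → ℂ} {f' : E →L[ℝ] ℂ} {x : E}
    (hg : ContinuousAt g x) (hexp : ∀ y, exp (g y) = f y) (hf : HasFDerivAt f f' x) :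
    HasFDerivAt g ((f x)⁻¹ • f') x := by
  have hfx : f x ≠ 0 := hexp x ▸ exp_ne_zero _
  have hlog : HasFDerivAt (fun y => g x + log (f y * (f x)⁻¹)) ((f x)⁻¹ • f') x := by
    have h1 : f x * (f x)⁻¹ ∈ slitPlane := by simp [hfx]
    simpa [Function.comp_def, hfx, smul_smul, mul_comm] using
      ((hasStrictDerivAt_log h1).hasDerivAt.comp_hasFDerivAt x (hf.mul_const (f x)⁻¹)).const_add
        (g x)
  refine hlog.congr_of_eventuallyEq ?_
  -- Near `x` the increment of `g` stays off the branch cut, so it is the principal logarithm.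
  have hnear : ∀ᶠ y in 𝓝 x, ‖g y - g x‖ < Real.pi :=
    (hg.sub continuousAt_const).norm.eventually_lt continuousAt_const (by simp [Real.pi_pos])
  filter_upwards [hnear] with y hy
  have him : |(g y - g x).im| < Real.pi := (abs_im_le_norm _).trans_lt hy
  rw [← hexp y, ← hexp x, ← exp_neg, ← exp_add, ← sub_eq_add_neg,
    log_exp (by linarith [abs_lt.mp him]) (abs_lt.mp him).2.le]
  ring

theorem Differentiable.exists_hasFDerivAt_log {f : E → ℂ} (hf : Differentiable ℝ f)
    (h0 : ∀ x, f x ≠ 0) :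
    ∃ g : E → ℂ, (∀ x, cexp (g x) = f x) ∧ ∀ x, HasFDerivAt g ((f x)⁻¹ • fderiv ℝ f x) x := by
  obtain ⟨g, hgc, hexp⟩ := exists_continuous_exp_eq hf.continuous h0
  exact ⟨g, hexp, fun x => hasFDerivAt_of_exp_eq hgc.continuousAt hexp (hf x).hasFDerivAt⟩

theorem fderiv_symplectic_apply_add_eq_zero {lam mu : E → Fin 2 → ℂ} {x w : E} {k : ℂ}
    (hlam : ∀ A, DifferentiableAt ℝ (fun y => lam y A) x)
    (hmu : ∀ A, DifferentiableAt ℝ (fun y => mu y A) x)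
    (hlamw : ∀ A, fderiv ℝ (fun y => lam y A) x w + k * lam x A = 0)
    (hmuw : ∀ A, fderiv ℝ (fun y => mu y A) x w + k * mu x A = 0) :
    fderiv ℝ (fun y => lam y 0 * mu y 1 - lam y 1 * mu y 0) x w +
      2 * k * (lam x 0 * mu x 1 - lam x 1 * mu x 0) = 0 := by
  rw [fderiv_fun_sub ((hlam 0).fun_mul (hmu 1)) ((hlam 1).fun_mul (hmu 0)),
    fderiv_fun_mul (hlam 0) (hmu 1), fderiv_fun_mul (hlam 1) (hmu 0)]
  simp only [sub_apply, add_apply,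
    smul_apply, smul_eq_mul]
  linear_combination lam x 0 * hmuw 1 + mu x 1 * hlamw 0 - lam x 1 * hmuw 0 - mu x 0 * hlamw 1

end

theorem stmt_12_general
    (E : Fin 3 → (Fin 3 → ℝ) → (Fin 3 → ℝ))
    (θ : Fin 3 → (Fin 3 → ℝ) → ((Fin 3 → ℝ) →L[ℝ] ℝ))
    (hspan : ∀ x v, v = ∑ i, θ i x v • E i x)
    (q : Fin 3 → ℝ)
    (lam mu : (Fin 3 → ℝ) → Fin 2 → ℂ)
    (hlam : ∀ Ab, Differentiable ℝ fun x => lam x Ab)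
    (hmu : ∀ Ab, Differentiable ℝ fun x => mu x Ab)
    (heq1 : ∀ x i Ab,
      fderiv ℝ (fun y => lam y Ab) x (E i x) + (Complex.I / 2) * (q i) * lam x Ab = 0)
    (heq2 : ∀ x i Ab,
      fderiv ℝ (fun y => mu y Ab) x (E i x) + (Complex.I / 2) * (q i) * mu x Ab = 0)
    (hω : ∀ x, lam x 0 * mu x 1 - lam x 1 * mu x 0 ≠ 0) :
    (∀ x v, (((∑ i, q i * θ i x v : ℝ)) : ℂ) =
        Complex.I * (fderiv ℝ (fun y => lam y 0 * mu y 1 - lam y 1 * mu y 0) x v) /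
          (lam x 0 * mu x 1 - lam x 1 * mu x 0)) ∧
    ∃ f : (Fin 3 → ℝ) → ℂ, Differentiable ℝ f ∧
      ∀ x v, (((∑ i, q i * θ i x v : ℝ)) : ℂ) = fderiv ℝ f x v := by
  set ω : (Fin 3 → ℝ) → ℂ := fun y => lam y 0 * mu y 1 - lam y 1 * mu y 0
  have hωdiff : Differentiable ℝ ω := ((hlam 0).mul (hmu 1)).sub ((hlam 1).mul (hmu 0))
  have hωE : ∀ x i, fderiv ℝ ω x (E i x) = -I * q i * ω x := fun x i => by
    linear_combination fderiv_symplectic_apply_add_eq_zero (fun A => hlam A x)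
      (fun A => hmu A x) (heq1 x i) (heq2 x i)
  have hdω : ∀ x v, fderiv ℝ ω x v = -I * (∑ i, q i * θ i x v : ℝ) * ω x := fun x v => by
    conv_lhs => rw [hspan x v]
    simp only [map_sum, map_smul, hωE, Complex.real_smul, Complex.ofReal_sum,
      Complex.ofReal_mul, Finset.mul_sum, Finset.sum_mul]
    exact Finset.sum_congr rfl fun i _ => by ring
  have hform : ∀ x v, ((∑ i, q i * θ i x v : ℝ) : ℂ) = I * fderiv ℝ ω x v / ω x :=
    fun x v => by
      rw [hdω, eq_div_iff (hω x)]
      linear_combination ((∑ i, q i * θ i x v : ℝ) : ℂ) * ω x * I_sq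
  obtain ⟨g, -, hg⟩ := hωdiff.exists_hasFDerivAt_log hω
  refine ⟨hform, fun y => I * g y, fun x => ((hg x).const_mul I).differentiableAt, fun x v => ?_⟩
  rw [((hg x).const_mul I).fderiv, hform]
  simp only [smul_apply, smul_eq_mul]
  ring

/-- Let `λ^Ā` and `μ^Ā` be two solutions of the first-order system
`E^e_i ∂_e λ^Ā + (i/2) q_i λ^Ā = 0` on a Bianchi 3-space (modelled on a chart `ℝ³` with
a global frame `E_i` and dual coframe `θ^i`), and set `ω := λ^Ā μ^B̄ ε_{ĀB̄}`.  Then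
`q_i θ^i_e = i·∂_e(ln ω)`; in particular, if the system admits global nonvanishing
solutions then the 1-form `q_i θ^i` is exact. -/
theorem stmt_12
    (E : Fin 3 → (Fin 3 → ℝ) → (Fin 3 → ℝ))
    (θ : Fin 3 → (Fin 3 → ℝ) → ((Fin 3 → ℝ) →L[ℝ] ℝ))
    (hdual : ∀ x i j, θ i x (E j x) = if i = j then 1 else 0)
    (hspan : ∀ x v, v = ∑ i, θ i x v • E i x)
    (q : Fin 3 → ℝ)
    (lam mu : (Fin 3 → ℝ) → Fin 2 → ℂ)
    (hlam : ∀ Ab, Differentiable ℝ fun x => lam x Ab)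
    (hmu : ∀ Ab, Differentiable ℝ fun x => mu x Ab)
    (heq1 : ∀ x i Ab,
      fderiv ℝ (fun y => lam y Ab) x (E i x) + (Complex.I / 2) * (q i) * lam x Ab = 0)
    (heq2 : ∀ x i Ab,
      fderiv ℝ (fun y => mu y Ab) x (E i x) + (Complex.I / 2) * (q i) * mu x Ab = 0)
    (hω : ∀ x, lam x 0 * mu x 1 - lam x 1 * mu x 0 ≠ 0) :
    (∀ x v, (((∑ i, q i * θ i x v : ℝ)) : ℂ) =
        Complex.I * (fderiv ℝ (fun y => lam y 0 * mu y 1 - lam y 1 * mu y 0) x v) /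
          (lam x 0 * mu x 1 - lam x 1 * mu x 0)) ∧
    ∃ f : (Fin 3 → ℝ) → ℂ, Differentiable ℝ f ∧
      ∀ x v, (((∑ i, q i * θ i x v : ℝ)) : ℂ) = fderiv ℝ f x v :=
  stmt_12_general E θ hspan q lam mu hlam hmu heq1 heq2 hω
end

section
/- Suppose λ is an eigenspinor of the square of the Sen–Witten operator with eigenvalue α² > 0, set μ^A := -(i√2/α)𝒟^A_{A'}λ̄^{A'}, and suppose both satisfy the 3-surface twistor equation, so 𝒟_e λ^A = -iα(√2/3)P^{AA'}_e μ̄_{A'} and 𝒟_e μ^A = iα(√2/3)P^{AA'}_e λ̄_{A'}. If μ^A = F·λ^A on an open set U for a smooth function F, then (2FF̄ + α²)·P^{AA'}_e λ_A λ̄_{A'} = 0 on U, and hence λ^A vanishes on U. -/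
open scoped ComplexConjugate

/-- The soldering forms `P^{AA'}_e` of the spacelike hypersurface in a spin frame adapted
to the normal: the `1/√2`-normalized Pauli matrices. -/
noncomputable def pauliN : Fin 3 → Matrix (Fin 2) (Fin 2) ℂ :=
  ![((((Real.sqrt 2)⁻¹ : ℝ) : ℂ)) • !![0, 1; 1, 0],
    ((((Real.sqrt 2)⁻¹ : ℝ) : ℂ)) • !![0, -Complex.I; Complex.I, 0],
    ((((Real.sqrt 2)⁻¹ : ℝ) : ℂ)) • !![1, 0; 0, -1]]

/-- The symplectic pairing `λ_A μ^A` of two spinors. -/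
def spPair (a b : Fin 2 → ℂ) : ℂ := a 0 * b 1 - a 1 * b 0

/-!
On `U` the pairing `λ_A μ^A = F λ_A λ^A` vanishes identically, so its derivative is zero there.
Expanding that derivative by the Leibniz rule and the twistor equations gives
`iκ(|F|² + 1) λ_A P^{AA'}_e λ̄_{A'}` with `κ = α√2/3`. In the direction where `P_e` is the
`σ_y`-soldering form, `λ_A P^{AA'}_e λ̄_{A'}` is a nonzero multiple of `|λ⁰|² + |λ¹|²`
(the null vector `λλ̄` has nonzero spatial part), so `λ = 0`.
-/

open Complex Matrix

lemma spPair_anticomm (a b : Fin 2 → ℂ) : spPair a b = -spPair b a := by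
  unfold spPair; ring

lemma spPair_smul_left (c : ℂ) (a b : Fin 2 → ℂ) : spPair (c • a) b = c * spPair a b := by
  simp only [spPair, Pi.smul_apply, smul_eq_mul]; ring

lemma spPair_smul_right (c : ℂ) (a b : Fin 2 → ℂ) : spPair a (c • b) = c * spPair a b := by
  simp only [spPair, Pi.smul_apply, smul_eq_mul]; ring

lemma spPair_smul_right_self (c : ℂ) (a : Fin 2 → ℂ) : spPair a (c • a) = 0 := by
  simp only [spPair, Pi.smul_apply, smul_eq_mul]; ring

lemma spPair_pauliN_one_mulVec_star (a : Fin 2 → ℂ) :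
    spPair a (pauliN 1 *ᵥ star a) = I / Real.sqrt 2 * ∑ A, (normSq (a A) : ℂ) := by
  simp [spPair, pauliN, mulVec, dotProduct, Fin.sum_univ_two, ← mul_conj]
  ring

/-- The Leibniz expansion of `𝒟_e(λ_A μ^A)` under the twistor equations with `μ = F λ`. -/
lemma spPair_twistor_eq (κ F : ℂ) (l : Fin 2 → ℂ) (e : Fin 3) :
    spPair ((-I * κ) • (pauliN e *ᵥ star (F • l))) (F • l) +
        spPair l ((I * κ) • (pauliN e *ᵥ star l)) =
      I * κ * (conj F * F + 1) * spPair l (pauliN e *ᵥ star l) := by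
  rw [star_smul, mulVec_smul, spPair_smul_left, spPair_smul_left, spPair_smul_right,
    spPair_smul_right, spPair_anticomm (pauliN e *ᵥ star l)]
  simp only [star_def]
  ring

lemma sum_normSq_eq_zero_iff {ι : Type*} [Fintype ι] (a : ι → ℂ) :
    ∑ i, normSq (a i) = 0 ↔ a = 0 := by
  rw [Finset.sum_eq_zero_iff_of_nonneg fun i _ => normSq_nonneg _, funext_iff]
  simp

lemma conj_mul_add_one_ne_zero (z : ℂ) : conj z * z + 1 ≠ 0 := by
  rw [← normSq_eq_conj_mul_self, ← ofReal_one, ← ofReal_add, ofReal_ne_zero]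
  exact (add_pos_of_nonneg_of_pos (normSq_nonneg z) one_pos).ne'

lemma fderiv_spPair_eq_zero_of_proportional {E : Type*} [NormedAddCommGroup E]
    [NormedSpace ℝ E] {lam mu : E → Fin 2 → ℂ} {F : E → ℂ} {U : Set E} (hU : IsOpen U)
    (hF : ∀ x ∈ U, ∀ A, mu x A = F x * lam x A) {x : E} (hx : x ∈ U) :
    fderiv ℝ (fun y => spPair (lam y) (mu y)) x = 0 := by
  have hloc : (fun y => spPair (lam y) (mu y)) =ᶠ[nhds x] fun _ => 0 := by
    filter_upwards [hU.mem_nhds hx] with y hy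
    rw [show mu y = F y • lam y from funext (hF y hy), spPair_smul_right_self]
  rw [hloc.fderiv_eq, fderiv_fun_const]
  rfl

theorem stmt_15_general (α : ℝ) (hα : α ≠ 0)
    (lam mu : (Fin 3 → ℝ) → Fin 2 → ℂ) (F : (Fin 3 → ℝ) → ℂ)
    (Dlam Dmu : (Fin 3 → ℝ) → Fin 3 → Fin 2 → ℂ)
    (htw1 : ∀ x e A, Dlam x e A =
      -Complex.I * α * (Real.sqrt 2 / 3) * ∑ A', pauliN e A A' * conj (mu x A'))
    (htw2 : ∀ x e A, Dmu x e A =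
      Complex.I * α * (Real.sqrt 2 / 3) * ∑ A', pauliN e A A' * conj (lam x A'))
    (hLeib : ∀ x e,
      fderiv ℝ (fun y => spPair (lam y) (mu y)) x (Pi.single e 1) =
        spPair (fun A => Dlam x e A) (mu x) + spPair (lam x) (fun A => Dmu x e A))
    (U : Set (Fin 3 → ℝ)) (hU : IsOpen U)
    (hF : ∀ x ∈ U, ∀ A, mu x A = F x * lam x A) :
    ∀ x ∈ U,
      (∀ e, (2 * F x * conj (F x) + ((α : ℂ)) ^ 2) *
          (∑ A, ∑ A', pauliN e A A' * lam x A * conj (lam x A')) = 0) ∧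
      (∀ A, lam x A = 0) := by
  intro x hx
  set κ : ℂ := α * (Real.sqrt 2 / 3)
  have hmu : mu x = F x • lam x := funext (hF x hx)
  have hDlam : (fun A => Dlam x 1 A) = (-I * κ) • (pauliN 1 *ᵥ star (mu x)) := by
    ext A
    simp only [htw1, κ, mulVec, dotProduct, Pi.smul_apply, smul_eq_mul, Pi.star_apply, star_def]
    ring
  have hDmu : (fun A => Dmu x 1 A) = (I * κ) • (pauliN 1 *ᵥ star (lam x)) := by
    ext A
    simp only [htw2, κ, mulVec, dotProduct, Pi.smul_apply, smul_eq_mul, Pi.star_apply, star_def]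
    ring
  have key := hLeib x 1
  rw [fderiv_spPair_eq_zero_of_proportional hU hF hx, hDlam, hDmu, hmu, spPair_twistor_eq,
    spPair_pauliN_one_mulVec_star] at key
  have hκ : κ ≠ 0 := by simp [κ, hα]
  have hlam : lam x = 0 := by
    rw [← sum_normSq_eq_zero_iff, ← ofReal_inj]
    push_cast
    simpa [hκ, conj_mul_add_one_ne_zero] using key.symm
  simp [hlam]

/-- Suppose `λ` is an eigenspinor of the square of the Sen–Witten operator with eigenvalue
`α² > 0`, `μ^A := -(i√2/α)𝒟^A_{A'}λ̄^{A'}`, and both satisfy the 3-surface twistor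
equation, so that `𝒟_e λ^A = -iα(√2/3) P^{AA'}_e μ̄_{A'}` and
`𝒟_e μ^A = iα(√2/3) P^{AA'}_e λ̄_{A'}` (hypotheses `htw1`, `htw2`), while the Sen
derivative obeys the Leibniz rule against the symplectic pairing and reduces to the
coordinate derivative on scalars (`hLeib`).  If `μ^A = F·λ^A` on an open set `U`, then
`(2FF̄ + α²)·P^{AA'}_e λ_A λ̄_{A'} = 0` on `U`, and hence `λ` vanishes on `U`. -/
theorem stmt_15 (α : ℝ) (hα : α ≠ 0)
    (lam mu : (Fin 3 → ℝ) → Fin 2 → ℂ) (F : (Fin 3 → ℝ) → ℂ)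
    (Dlam Dmu : (Fin 3 → ℝ) → Fin 3 → Fin 2 → ℂ)
    (hdiff : ∀ Ab, Differentiable ℝ (fun x => lam x Ab) ∧
      Differentiable ℝ (fun x => mu x Ab))
    (htw1 : ∀ x e A, Dlam x e A =
      -Complex.I * α * (Real.sqrt 2 / 3) * ∑ A', pauliN e A A' * conj (mu x A'))
    (htw2 : ∀ x e A, Dmu x e A =
      Complex.I * α * (Real.sqrt 2 / 3) * ∑ A', pauliN e A A' * conj (lam x A'))
    (hLeib : ∀ x e,
      fderiv ℝ (fun y => spPair (lam y) (mu y)) x (Pi.single e 1) =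
        spPair (fun A => Dlam x e A) (mu x) + spPair (lam x) (fun A => Dmu x e A))
    (U : Set (Fin 3 → ℝ)) (hU : IsOpen U)
    (hF : ∀ x ∈ U, ∀ A, mu x A = F x * lam x A) :
    ∀ x ∈ U,
      (∀ e, (2 * F x * conj (F x) + ((α : ℂ)) ^ 2) *
          (∑ A, ∑ A', pauliN e A A' * lam x A * conj (lam x A')) = 0) ∧
      (∀ A, lam x A = 0) :=
  stmt_15_general α hα lam mu F Dlam Dmu htw1 htw2 hLeib U hU hF
end
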